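/- arXiv:2205.05247 — 2 statements merged into one kernel-verified Lean document; each statement's English description precedes it below -/
import Mathlib

section
/- Let p be an odd prime. For positive integers n, m, k, N with 2m ≡ 2n (mod φ(p^N)) and 2n, 2m ≥ N, the polycotangent numbers satisfy T_{2m}^{(-k)} ≡ T_{2n}^{(-k)} (mod p^N). -/
/-- Stirling numbers of the second kind, defined by the recursion
`S(0,0)=1`, `S(n,0)=S(0,m)=0` for `n,m ≥ 1`, `S(n+1,m+1)=S(n,m)+(m+1)*S(n,m+1)`. -/
def stirling2 : ℕ → ℕ → ℕ
  | 0, 0 => 1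
  | 0, _ + 1 => 0
  | _ + 1, 0 => 0
  | n + 1, m + 1 => stirling2 n m + (m + 1) * stirling2 n (m + 1)
/-- The polycosecant numbers with nonpositive upper index:
`Dneg n k = D_{2n}^{(-k)} = ∑_{i=1}^{min(2n+1,k)} (i!(i-1)!/2^{i-1}) S(k,i) S(2n+1,i)`. -/
def Dneg (n k : ℕ) : ℚ :=
  ∑ i ∈ Finset.Icc 1 (min (2 * n + 1) k),
    (Nat.factorial i * Nat.factorial (i - 1) : ℚ) / 2 ^ (i - 1) *
      (stirling2 k i : ℚ) * (stirling2 (2 * n + 1) i : ℚ)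
/-- The polycotangent numbers with nonpositive upper index:
`Tneg n k = T_{2n}^{(-k)} = ∑_{i=0}^{n} binom(2n,2i) D_{2i}^{(-k)}`. -/
def Tneg (n k : ℕ) : ℚ :=
  ∑ i ∈ Finset.range (n + 1), (Nat.choose (2 * n) (2 * i) : ℚ) * Dneg i k

lemma stirling2_eq_zero : ∀ {n l : ℕ}, n < l → stirling2 n l = 0
  | 0, 0, h => absurd h (lt_irrefl 0)
  | 0, _ + 1, _ => rfl
  | n + 1, 0, h => absurd h (Nat.not_lt_zero _).elim
  | n + 1, l + 1, h => by
      have h1 : n < l := Nat.lt_of_succ_lt_succ h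
      have h2 : n < l + 1 := Nat.lt_of_lt_of_le h1 (Nat.le_succ l)
      show stirling2 n l + (l + 1) * stirling2 n (l + 1) = 0
      rw [stirling2_eq_zero h1, stirling2_eq_zero h2, Nat.mul_zero]

lemma stirling2_formula (n l : ℕ) :
    ∑ j ∈ Finset.range (l + 1), (-1 : ℤ) ^ (l - j) * (l.choose j) * (j : ℤ) ^ n
      = (l.factorial : ℤ) * stirling2 n l := by
  induction n generalizing l with
  | zero =>
    match l with
    | 0 => simp [stirling2]
    | l + 1 =>
      have key : ∑ j ∈ Finset.range (l + 1 + 1),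
            (-1 : ℤ) ^ (l + 1 - j) * ((l+1).choose j) * (j : ℤ) ^ 0
          = (-1 : ℤ)^(l+1) * ∑ j ∈ Finset.range (l + 1 + 1), (-1 : ℤ) ^ j * ((l+1).choose j) := by
        rw [Finset.mul_sum]
        refine Finset.sum_congr rfl fun j hj => ?_
        have hjl : j ≤ l + 1 := Nat.lt_succ_iff.mp (Finset.mem_range.mp hj)
        have h2 : (-1:ℤ)^(l+1-j) * (-1:ℤ)^j = (-1:ℤ)^(l+1) := by
          rw [← pow_add, Nat.sub_add_cancel hjl]
        rw [pow_zero, mul_one, ← h2]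
        have h3 : (-1:ℤ)^j * (-1:ℤ)^j = 1 := by
          rw [← pow_add, ← two_mul, pow_mul]; norm_num
        calc (-1:ℤ)^(l+1-j) * ((l+1).choose j)
            = (-1:ℤ)^(l+1-j) * ((-1:ℤ)^j * (-1:ℤ)^j) * ((l+1).choose j) := by rw [h3]; ring
          _ = (-1:ℤ)^(l+1-j) * (-1:ℤ)^j * ((-1:ℤ)^j * ((l+1).choose j)) := by ring
      rw [key, Int.alternating_sum_range_choose_of_ne (Nat.succ_ne_zero l)]
      rw [show stirling2 0 (l+1) = 0 from rfl]
      simp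
  | succ n ih =>
    match l with
    | 0 =>
      rw [show stirling2 (n+1) 0 = 0 from rfl]
      simp
    | l + 1 =>
      -- key termwise identity
      have step : ∀ j ∈ Finset.range (l + 1 + 1),
          (-1 : ℤ) ^ (l + 1 - j) * ((l+1).choose j) * (j : ℤ) ^ (n+1)
          = ((l:ℤ)+1) * ((-1 : ℤ) ^ (l + 1 - j) * ((l+1).choose j) * (j : ℤ) ^ n)
            - ((l:ℤ)+1) * ((-1 : ℤ) ^ (l + 1 - j) * (l.choose j) * (j : ℤ) ^ n) := by
        intro j hj
        have hkey' : ((l:ℤ)+1) * ((l+1).choose j) = ((l:ℤ)+1) * (l.choose j) + (j:ℤ) * ((l+1).choose j) := by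
          match j with
          | 0 => simp
          | j + 1 =>
            have h2 : (l+1).choose (j+1) = l.choose j + l.choose (j+1) := Nat.choose_succ_succ l j
            have h3 : (l+1) * l.choose j = (l+1).choose (j+1) * (j+1) := Nat.add_one_mul_choose_eq l j
            have h3' : ((l:ℤ)+1) * (l.choose j) = ((l+1).choose (j+1) : ℤ) * ((j:ℤ)+1) := by
              exact_mod_cast h3
            push_cast [h2]
            push_cast [h2] at h3'
            linear_combination h3'
        rw [pow_succ]
        linear_combination (-(-1:ℤ)^(l+1-j)*(j:ℤ)^n) * hkey'
      rw [Finset.sum_congr rfl step, Finset.sum_sub_distrib, ← Finset.mul_sum, ← Finset.mul_sum]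
      -- second sum: shift sign and restrict
      have hsign : ∀ j ∈ Finset.range (l + 1 + 1),
          (-1 : ℤ) ^ (l + 1 - j) * (l.choose j) * (j : ℤ) ^ n
          = -((-1 : ℤ) ^ (l - j) * (l.choose j) * (j : ℤ) ^ n) ∨ (l.choose j = 0) := by
        intro j hj
        by_cases hjl : j ≤ l
        · left
          rw [show l + 1 - j = (l - j) + 1 by omega, pow_succ]
          ring
        · right; exact Nat.choose_eq_zero_of_lt (by omega)
      have hsum2 : ∑ j ∈ Finset.range (l + 1 + 1), (-1 : ℤ) ^ (l + 1 - j) * (l.choose j) * (j : ℤ) ^ n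
          = -∑ j ∈ Finset.range (l + 1), (-1 : ℤ) ^ (l - j) * (l.choose j) * (j : ℤ) ^ n := by
        rw [Finset.sum_range_succ, Nat.choose_eq_zero_of_lt (Nat.lt_succ_self l)]
        push_cast
        rw [mul_zero, zero_mul, add_zero, ← Finset.sum_neg_distrib]
        refine Finset.sum_congr rfl fun j hj => ?_
        have hjl : j ≤ l := Nat.lt_succ_iff.mp (Finset.mem_range.mp hj)
        rw [show l + 1 - j = (l - j) + 1 by omega, pow_succ]
        ring
      rw [hsum2, ih, ih]
      rw [show stirling2 (n+1) (l+1) = stirling2 n l + (l + 1) * stirling2 n (l + 1) from rfl]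
      rw [Nat.factorial_succ]
      push_cast
      ring

-- pairing sum lemma
lemma sum_range_two_mul {M : Type*} [AddCommMonoid M] (f : ℕ → M) (n : ℕ) :
    ∑ j ∈ Finset.range (2 * n + 2), f j
      = ∑ i ∈ Finset.range (n + 1), (f (2 * i) + f (2 * i + 1)) := by
  induction n with
  | zero => simp [Finset.sum_range_succ]
  | succ n ih =>
    rw [show 2 * (n+1) + 2 = (2*n+2) + 1 + 1 by ring]
    rw [Finset.sum_range_succ, Finset.sum_range_succ, ih, Finset.sum_range_succ]
    rw [show 2*n+2 = 2*(n+1) by ring, show 2*n+2+1 = 2*(n+1)+1 by ring]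
    rw [Finset.sum_range_succ (n := n+1), Finset.sum_range_succ (n := n), add_assoc]

/-- even part of binomial expansion -/
lemma even_binom_sum (x : ℚ) (n : ℕ) :
    2 * ∑ i ∈ Finset.range (n + 1), ((2*n).choose (2*i) : ℚ) * x ^ (2*i)
      = (1 + x) ^ (2*n) + (1 - x) ^ (2*n) := by
  have h1 : (1 + x) ^ (2*n) = ∑ j ∈ Finset.range (2*n+1), x ^ j * ((2*n).choose j : ℚ) := by
    rw [add_comm 1 x, add_pow]
    simp
  have h2 : (1 - x) ^ (2*n) = ∑ j ∈ Finset.range (2*n+1), (-x) ^ j * ((2*n).choose j : ℚ) := by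
    rw [show (1 - x) = (-x) + 1 by ring, add_pow]
    simp
  rw [h1, h2, ← Finset.sum_add_distrib]
  have h3 : ∑ j ∈ Finset.range (2*n+1), (x ^ j * ((2*n).choose j : ℚ) + (-x) ^ j * ((2*n).choose j : ℚ))
      = ∑ j ∈ Finset.range (2*n+2), (x ^ j * ((2*n).choose j : ℚ) + (-x) ^ j * ((2*n).choose j : ℚ)) := by
    rw [Finset.sum_range_succ (n := 2*n+1)]
    have : (2*n).choose (2*n+1) = 0 := Nat.choose_eq_zero_of_lt (by omega)
    rw [this]
    push_cast
    ring
  rw [h3, sum_range_two_mul (fun j => x ^ j * ((2*n).choose j : ℚ) + (-x) ^ j * ((2*n).choose j : ℚ)) n]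
  rw [Finset.mul_sum]
  refine (Finset.sum_congr rfl fun i _ => ?_).symm
  have he : (-x) ^ (2*i) = x ^ (2*i) := by
    rw [neg_pow, Even.neg_one_pow ⟨i, by ring⟩, one_mul]
  have ho : (-x) ^ (2*i+1) = -(x ^ (2*i+1)) := by
    rw [neg_pow, pow_succ, Even.neg_one_pow ⟨i, by ring⟩]
    ring
  rw [he, ho]
  ring

/-- Euler-type congruence -/
lemma euler_cong (p N n m : ℕ) (hp : p.Prime) (hN : 0 < N)
    (hmod : 2 * m ≡ 2 * n [MOD Nat.totient (p ^ N)])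
    (h2n : N ≤ 2 * n) (h2m : N ≤ 2 * m) (a : ℕ) :
    a ^ (2*m) ≡ a ^ (2*n) [MOD p ^ N] := by
  by_cases hpa : p ∣ a
  · have key : ∀ t : ℕ, N ≤ 2*t → a ^ (2*t) ≡ 0 [MOD p ^ N] := by
      intro t ht
      have : p ^ N ∣ a ^ (2*t) :=
        dvd_trans (pow_dvd_pow p ht) (pow_dvd_pow_of_dvd hpa (2*t))
      simpa [Nat.modEq_zero_iff_dvd] using this
    exact (key m h2m).trans (key n h2n).symm
  · have hcop : a.Coprime (p ^ N) :=
      Nat.Coprime.pow_right N (((Nat.Prime.coprime_iff_not_dvd hp).mpr hpa).symm)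
    have heuler : a ^ (Nat.totient (p ^ N)) ≡ 1 [MOD p ^ N] := Nat.ModEq.pow_totient hcop
    have key : ∀ s t : ℕ, s ≤ t → s ≡ t [MOD Nat.totient (p ^ N)] →
        a ^ t ≡ a ^ s [MOD p ^ N] := by
      intro s t hst hm
      obtain ⟨e, he⟩ := (Nat.modEq_iff_dvd' hst).mp hm
      calc a ^ t = a ^ s * (a ^ (Nat.totient (p^N)))^e := by
              rw [← pow_mul, ← pow_add]; congr 1; omega
        _ ≡ a ^ s * 1 ^ e [MOD p ^ N] := Nat.ModEq.mul rfl (heuler.pow e)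
        _ = a ^ s := by rw [one_pow, mul_one]
    rcases le_total (2*n) (2*m) with h | h
    · exact key (2*n) (2*m) h hmod.symm
    · exact (key (2*m) (2*n) h hmod).symm

lemma Dneg_eq (k i : ℕ) : Dneg i k = ∑ l ∈ Finset.Icc 1 k, ∑ j ∈ Finset.range (l+1),
    ((((l-1).factorial : ℚ) * (stirling2 k l : ℚ) * (-1:ℚ)^(l-j) * (l.choose j : ℚ)) / 2^(l-1))
      * (j:ℚ)^(2*i+1) := by
  rw [Dneg]
  rw [Finset.sum_subset (Finset.Icc_subset_Icc_right (min_le_right _ _))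
    (fun l hl hnl => by
      simp only [Finset.mem_Icc] at hl hnl
      have : 2*i+1 < l := by omega
      rw [stirling2_eq_zero this]
      simp)]
  refine Finset.sum_congr rfl fun l hl => ?_
  have h1l : 1 ≤ l := (Finset.mem_Icc.mp hl).1
  have hform : ∑ j ∈ Finset.range (l + 1), (-1 : ℚ) ^ (l - j) * (l.choose j) * (j : ℚ) ^ (2*i+1)
      = (l.factorial : ℚ) * stirling2 (2*i+1) l := by
    exact_mod_cast congrArg (fun z : ℤ => (z : ℚ)) (stirling2_formula (2*i+1) l)
  have : ∑ j ∈ Finset.range (l+1),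
      ((((l-1).factorial : ℚ) * (stirling2 k l : ℚ) * (-1:ℚ)^(l-j) * (l.choose j : ℚ)) / 2^(l-1))
        * (j:ℚ)^(2*i+1)
      = (((l-1).factorial : ℚ) * (stirling2 k l : ℚ) / 2^(l-1)) *
          ∑ j ∈ Finset.range (l + 1), (-1 : ℚ) ^ (l - j) * (l.choose j) * (j : ℚ) ^ (2*i+1) := by
    rw [Finset.mul_sum]
    exact Finset.sum_congr rfl fun j _ => by ring
  rw [this, hform]
  have hlfac : (l.factorial : ℚ) = l * (l-1).factorial := by
    rw [show l = (l-1)+1 by omega] ; rw [Nat.factorial_succ]; push_cast; ring_nf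
  ring

lemma Tneg_closed (k n : ℕ) :
    Tneg n k = ∑ l ∈ Finset.Icc 1 k, ∑ j ∈ Finset.range (l+1),
      ((((l-1).factorial : ℚ) * (stirling2 k l : ℚ) * (-1:ℚ)^(l-j) * (l.choose j : ℚ) * (j:ℚ)) / 2^l)
        * ((1+(j:ℚ))^(2*n) + (1-(j:ℚ))^(2*n)) := by
  rw [Tneg]
  have h1 : ∀ i ∈ Finset.range (n+1), ((2*n).choose (2*i) : ℚ) * Dneg i k
      = ∑ l ∈ Finset.Icc 1 k, ∑ j ∈ Finset.range (l+1),
        ((2*n).choose (2*i) : ℚ) *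
        (((((l-1).factorial : ℚ) * (stirling2 k l : ℚ) * (-1:ℚ)^(l-j) * (l.choose j : ℚ)) / 2^(l-1))
          * (j:ℚ)^(2*i+1)) := by
    intro i _
    rw [Dneg_eq k i, Finset.mul_sum]
    exact Finset.sum_congr rfl fun l _ => Finset.mul_sum _ _ _
  rw [Finset.sum_congr rfl h1, Finset.sum_comm]
  refine Finset.sum_congr rfl fun l hl => ?_
  rw [Finset.sum_comm]
  refine Finset.sum_congr rfl fun j hj => ?_
  have h1l : 1 ≤ l := (Finset.mem_Icc.mp hl).1
  have hebs := even_binom_sum (j:ℚ) n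
  have h2l : (2:ℚ)^l = 2 * 2^(l-1) := by
    rw [← pow_succ']
    congr 1
    omega
  have : ∑ i ∈ Finset.range (n+1),
        ((2*n).choose (2*i) : ℚ) *
        (((((l-1).factorial : ℚ) * (stirling2 k l : ℚ) * (-1:ℚ)^(l-j) * (l.choose j : ℚ)) / 2^(l-1))
          * (j:ℚ)^(2*i+1))
      = ((((l-1).factorial : ℚ) * (stirling2 k l : ℚ) * (-1:ℚ)^(l-j) * (l.choose j : ℚ) * (j:ℚ)) / 2^(l-1))
          * ∑ i ∈ Finset.range (n+1), ((2*n).choose (2*i) : ℚ) * (j:ℚ)^(2*i) := by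
    rw [Finset.mul_sum]
    refine Finset.sum_congr rfl fun i _ => ?_
    rw [pow_succ]
    ring
  rw [this, h2l, ← hebs]
  ring

/-- integer version of `i!(i-1)!/2^(i-1)`, shifted: `bfac i = (i+1)! i! / 2^i`. -/
def bfac : ℕ → ℕ
  | 0 => 1
  | i + 1 => bfac i * ((i + 1) * (i + 2) / 2)

lemma bfac_eq (i : ℕ) : (bfac i : ℚ) = ((i+1).factorial * i.factorial : ℚ) / 2 ^ i := by
  induction i with
  | zero => simp [bfac]
  | succ i ih =>
    have hdvd : 2 ∣ (i + 1) * (i + 2) := by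
      rcases Nat.even_or_odd i with ⟨c, hc⟩ | ⟨c, hc⟩
      · exact ⟨(i+1)*(c+1), by subst hc; ring⟩
      · exact ⟨(c+1)*(i+2), by subst hc; ring⟩
    have hcast : (((i + 1) * (i + 2) / 2 : ℕ) : ℚ) = ((i:ℚ) + 1) * ((i:ℚ) + 2) / 2 := by
      rw [Nat.cast_div hdvd (by norm_num)]
      push_cast; ring
    show ((bfac i * ((i + 1) * (i + 2) / 2) : ℕ) : ℚ) = _
    push_cast [hcast] at *
    rw [ih]
    rw [Nat.factorial_succ (i+1), Nat.factorial_succ i]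
    push_cast
    rw [pow_succ]
    field_simp
    ring

/-- `Tneg` takes integer values. -/
lemma Tneg_int (n k : ℕ) : ∃ t : ℕ, Tneg n k = (t : ℚ) := by
  have hD : ∀ i : ℕ, Dneg i k
      = ((∑ l ∈ Finset.Icc 1 (min (2*i+1) k), bfac (l-1) * stirling2 k l * stirling2 (2*i+1) l : ℕ) : ℚ) := by
    intro i
    rw [Dneg]
    push_cast
    refine Finset.sum_congr rfl fun l hl => ?_
    have h1l : 1 ≤ l := (Finset.mem_Icc.mp hl).1
    have : (bfac (l-1) : ℚ) = (l.factorial * (l-1).factorial : ℚ) / 2 ^ (l-1) := by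
      rw [bfac_eq, show l - 1 + 1 = l by omega]
    rw [this]
  refine ⟨∑ i ∈ Finset.range (n + 1), (2*n).choose (2*i) *
    (∑ l ∈ Finset.Icc 1 (min (2*i+1) k), bfac (l-1) * stirling2 k l * stirling2 (2*i+1) l), ?_⟩
  rw [Tneg]
  push_cast
  refine Finset.sum_congr rfl fun i _ => ?_
  rw [hD i]
  push_cast
  ring

theorem stmt10 (p n m k N : ℕ) (hp : p.Prime) (hodd : Odd p)
    (hn : 0 < n) (hm : 0 < m) (hk : 0 < k) (hN : 0 < N)
    (hmod : 2 * m ≡ 2 * n [MOD Nat.totient (p ^ N)])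
    (h2n : N ≤ 2 * n) (h2m : N ≤ 2 * m) :
    ∃ c : ℤ, Tneg m k - Tneg n k = (p : ℚ) ^ N * c := by
  obtain ⟨tm, htm⟩ := Tneg_int m k
  obtain ⟨tn, htn⟩ := Tneg_int n k
  set t : ℤ := (tm : ℤ) - tn with ht
  -- step 1: each base difference is divisible by p^N
  have hdelta : ∀ j : ℕ, ∃ d : ℤ,
      ((1+(j:ℚ))^(2*m) + (1-(j:ℚ))^(2*m)) - ((1+(j:ℚ))^(2*n) + (1-(j:ℚ))^(2*n))
        = (p:ℚ)^N * d := by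
    intro j
    obtain ⟨d1, hd1⟩ := (euler_cong p N n m hp hN hmod h2n h2m (j+1)).symm.dvd
    obtain ⟨d2, hd2⟩ := (euler_cong p N n m hp hN hmod h2n h2m ((j:ℤ)-1).natAbs).symm.dvd
    have hq1 : (1+(j:ℚ))^(2*m) - (1+(j:ℚ))^(2*n) = (p:ℚ)^N * d1 := by
      have := congrArg (fun z : ℤ => (z : ℚ)) hd1
      push_cast at this ⊢
      linear_combination this
    have hq2 : ((((j:ℤ)-1).natAbs : ℚ))^(2*m) - (((j:ℤ)-1).natAbs : ℚ)^(2*n) = (p:ℚ)^N * d2 := by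
      have := congrArg (fun z : ℤ => (z : ℚ)) hd2
      push_cast [Nat.cast_natAbs] at this ⊢
      linear_combination this
    have hj2 : ∀ s : ℕ, (1-(j:ℚ))^(2*s) = ((((j:ℤ)-1).natAbs : ℚ))^(2*s) := by
      intro s
      have h1 : (1-(j:ℚ))^(2*s) = ((j:ℚ)-1)^(2*s) := by
        rw [show (1-(j:ℚ)) = -((j:ℚ)-1) by ring, Even.neg_pow ⟨s, by ring⟩]
      have hs : ((((j:ℤ)-1).natAbs : ℤ))^2 = ((j:ℤ)-1)^2 := Int.natAbs_sq _
      have h2 : ((((j:ℤ)-1).natAbs : ℚ))^2 = ((j:ℚ)-1)^2 := by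
        have := congrArg (fun z : ℤ => (z : ℚ)) hs
        push_cast [Nat.cast_natAbs] at this ⊢
        linear_combination this
      rw [h1, pow_mul, pow_mul, h2]
    refine ⟨d1 + d2, ?_⟩
    rw [hj2 m, hj2 n]
    push_cast
    linarith [hq1, hq2]
  choose d hd using hdelta
  -- step 2: difference as double sum
  have hdiff : Tneg m k - Tneg n k = ∑ l ∈ Finset.Icc 1 k, ∑ j ∈ Finset.range (l+1),
      ((((l-1).factorial : ℚ) * (stirling2 k l : ℚ) * (-1:ℚ)^(l-j) * (l.choose j : ℚ) * (j:ℚ)) / 2^l)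
        * ((p:ℚ)^N * d j) := by
    rw [Tneg_closed k m, Tneg_closed k n, ← Finset.sum_sub_distrib]
    refine Finset.sum_congr rfl fun l _ => ?_
    rw [← Finset.sum_sub_distrib]
    refine Finset.sum_congr rfl fun j _ => ?_
    rw [← mul_sub, hd j]
  -- step 3: multiply by 2^(2k)
  have hE : (2:ℚ)^(2*k) * (Tneg m k - Tneg n k)
      = (p:ℚ)^N * ((∑ l ∈ Finset.Icc 1 k, ∑ j ∈ Finset.range (l+1),
          (((l-1).factorial : ℤ) * (stirling2 k l : ℤ) * (-1:ℤ)^(l-j) * (l.choose j : ℤ)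
            * (j:ℤ) * 2^(2*k-l) * d j) : ℤ) : ℚ) := by
    rw [hdiff, Finset.mul_sum]
    push_cast
    rw [Finset.mul_sum]
    refine Finset.sum_congr rfl fun l hl => ?_
    rw [Finset.mul_sum, Finset.mul_sum]
    refine Finset.sum_congr rfl fun j _ => ?_
    have hlk : l ≤ k := (Finset.mem_Icc.mp hl).2
    have hsplit : (2:ℚ)^(2*k) = 2^(2*k-l) * 2^l := by
      rw [← pow_add]; congr 1; omega
    have h2l : ((2:ℚ)^l) ≠ 0 := by positivity
    rw [hsplit]
    field_simp
  -- step 4: conclude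
  rw [htm, htn] at hE ⊢
  set E : ℤ := ∑ l ∈ Finset.Icc 1 k, ∑ j ∈ Finset.range (l+1),
      (((l-1).factorial : ℤ) * (stirling2 k l : ℤ) * (-1:ℤ)^(l-j) * (l.choose j : ℤ)
        * (j:ℤ) * 2^(2*k-l) * d j) with hEdef
  have hint : (2:ℤ)^(2*k) * t = (p:ℤ)^N * E := by
    have h2 : (((2:ℤ)^(2*k) * t : ℤ) : ℚ) = (((p:ℤ)^N * E : ℤ) : ℚ) := by
      push_cast [ht]
      linarith [hE]
    exact_mod_cast h2
  have hdvd : ((p:ℤ)^N) ∣ (2:ℤ)^(2*k) * t := ⟨E, hint⟩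
  have hcop : IsCoprime ((p:ℤ)^N) ((2:ℤ)^(2*k)) := by
    have hp2 : Nat.Coprime p 2 := by
      rcases hodd with ⟨r, hr⟩
      have : p ≠ 2 := by omega
      exact (Nat.coprime_primes hp Nat.prime_two).mpr this
    have : Nat.Coprime (p^N) (2^(2*k)) := Nat.Coprime.pow N (2*k) hp2
    have := Nat.Coprime.isCoprime this
    exact_mod_cast this
  have hdvdt : ((p:ℤ)^N) ∣ t := by
    exact hcop.dvd_of_dvd_mul_left hdvd
  obtain ⟨c, hc⟩ := hdvdt
  refine ⟨c, ?_⟩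
  have : ((tm:ℚ) - tn) = (((p:ℤ)^N * c : ℤ) : ℚ) := by
    rw [← hc, ht]; push_cast; ring
  rw [this]
  push_cast
  ring
end

section
/- Let p be an odd prime. For all nonnegative integers n, the polycotangent number T_{2n}^{(-p+1)} ≡ 1 (mod p) if 2n = 0 or (p-1) does not divide 2n, and T_{2n}^{(-p+1)} ≡ 2 (mod p) if 2n ≠ 0 and (p-1) divides 2n. -/
/-!
Forward differences compute Stirling numbers: `l! S(k,l) = Δ^l x^k (0)` and
`(l-1)! S(k+1,l) = Δ^(l-1) x^k (1)`. Modulo `p`, Fermat's little theorem turns the first into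
`l! S(p-1,l) ≡ (-1)^(l+1)` for `1 ≤ l ≤ p-1`, so after exchanging sums
`D_{2n}^{(-p+1)} ≡ Σ_{j<p-1} (-1)^j (j+1)^{2n} Σ_{s<p-1} binom(s,j) 2^{-s}`.
The inner sum is `1 - (-1)^j` (Pascal's rule and `2^{p-1} ≡ 1`), and the alternating part
cancels under `j + 1 ↦ p - (j + 1)`, leaving `D_{2n}^{(-p+1)} ≡ -Σ_{a=1}^{p-1} a^{2n}`.
This power sum `-Σ_{a=1}^{p-1} a^j ≡ [p - 1 ∣ j]` vanishes for odd `j` since `p - 1` is even, so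
the binomial theorem gives `T_{2n}^{(-p+1)} ≡ -Σ_{a=1}^{p-1} (a+1)^{2n} = 1 - Σ_{b ∈ 𝔽_p} b^{2n}`.
Integrality comes from `2^(l-1) ∣ l! (l-1)!`.
-/

open scoped fwdDiff
open Finset Nat

theorem stirling2_eq_stirlingSecond : stirling2 = Nat.stirlingSecond := by
  ext n k
  induction n generalizing k with
  | zero => cases k <;> rfl
  | succ n ih =>
    cases k with
    | zero => rfl
    | succ k => rw [stirling2, stirlingSecond_succ_succ, ih, ih, add_comm]

section ForwardDifference

variable {R : Type*} [CommRing R]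

theorem fwdDiff_iter_succ_apply {M G : Type*} [AddCommMonoid M] [AddCommGroup G] (h : M)
    (f : M → G) (n : ℕ) (y : M) :
    (Δ_[h])^[n + 1] f y = (Δ_[h])^[n] f (y + h) - (Δ_[h])^[n] f y := by
  rw [Function.iterate_succ_apply']
  rfl

theorem fwdDiff_iter_succ_id_mul (f : R → R) (n : ℕ) (y : R) :
    (Δ_[1])^[n + 1] (fun r ↦ r * f r) y =
      y * (Δ_[1])^[n + 1] f y + (n + 1) * (Δ_[1])^[n] f (y + 1) := by
  induction n generalizing y with
  | zero =>
    simp only [fwdDiff_iter_succ_apply, Function.iterate_zero, id]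
    push_cast
    ring
  | succ n ih =>
    rw [fwdDiff_iter_succ_apply 1 _ (n + 1), ih, ih]
    simp only [fwdDiff_iter_succ_apply 1 f]
    push_cast
    ring

theorem fwdDiff_iter_pow_apply_zero (k l : ℕ) :
    (Δ_[1])^[l] (fun r : R ↦ r ^ k) 0 = (l ! * k.stirlingSecond l : ℕ) := by
  induction k generalizing l with
  | zero =>
    cases l with
    | zero => simp
    | succ l => rw [fwdDiff_iter_pow_eq_zero_of_lt (succ_pos l)]; simp
  | succ k ih =>
    cases l with
    | zero => simp
    | succ l =>
      have shift : (Δ_[1])^[l] (fun r : R ↦ r ^ k) 1 =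
          (Δ_[1])^[l] (fun r : R ↦ r ^ k) 0 + (Δ_[1])^[l + 1] (fun r : R ↦ r ^ k) 0 := by
        rw [fwdDiff_iter_succ_apply, zero_add]
        ring
      simp_rw [_root_.pow_succ']
      rw [fwdDiff_iter_succ_id_mul, zero_add, shift, ih, ih, stirlingSecond_succ_succ,
        factorial_succ]
      push_cast
      ring

theorem natCast_factorial_mul_stirlingSecond_succ_succ [NoZeroDivisors R] {k m : ℕ}
    (hm : (m + 1 : R) ≠ 0) :
    ((m ! * (k + 1).stirlingSecond (m + 1) : ℕ) : R) = (Δ_[1])^[m] (fun r : R ↦ r ^ k) 1 := by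
  have h := fwdDiff_iter_succ_id_mul (fun r : R ↦ r ^ k) m 0
  simp only [← _root_.pow_succ', fwdDiff_iter_pow_apply_zero, zero_mul, zero_add] at h
  apply mul_left_cancel₀ hm
  rw [← h, factorial_succ]
  push_cast
  ring

end ForwardDifference

theorem sum_range_two_mul_succ_eq_sum_even {M : Type*} [AddCommMonoid M] (f : ℕ → M)
    (hf : ∀ j, Odd j → f j = 0) (n : ℕ) :
    ∑ j ∈ range (2 * n + 1), f j = ∑ i ∈ range (n + 1), f (2 * i) := by
  induction n with
  | zero => simp
  | succ n ih =>
    rw [show 2 * (n + 1) + 1 = 2 * n + 1 + 1 + 1 by ring, sum_range_succ, sum_range_succ, ih,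
      hf _ (odd_two_mul_add_one n), add_zero, sum_range_succ (n := n + 1), mul_add_one]

-- The coefficient `i! (i-1)! / 2^(i-1)` of `Dneg` at `i = s + 1`; the division is exact.
def dnegWeight (s : ℕ) : ℕ := (s + 1)! * s ! / 2 ^ s

theorem two_pow_dvd_factorial_succ_mul_factorial (s : ℕ) : 2 ^ s ∣ (s + 1)! * s ! := by
  induction s with
  | zero => simp
  | succ s ih =>
    have hstep : (s + 2)! * (s + 1)! = (s + 1)! * s ! * ((s + 1) * (s + 2)) := by
      rw [factorial_succ (s + 1), factorial_succ s]
      ring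
    rw [hstep, pow_succ]
    exact mul_dvd_mul ih (Nat.even_mul_succ_self (s + 1)).two_dvd

theorem dnegWeight_mul_two_pow (s : ℕ) : dnegWeight s * 2 ^ s = (s + 1)! * s ! :=
  Nat.div_mul_cancel (two_pow_dvd_factorial_succ_mul_factorial s)

-- `Dneg` reindexed by `i = s + 1` and summed up to `i = k`: the added terms vanish, as
-- `S(2n+1, i) = 0` for `i > 2n+1`.
def DnegNat (n k : ℕ) : ℕ :=
  ∑ s ∈ range k, dnegWeight s * k.stirlingSecond (s + 1) * (2 * n + 1).stirlingSecond (s + 1)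

def TnegNat (n k : ℕ) : ℕ :=
  ∑ i ∈ range (n + 1), (2 * n).choose (2 * i) * DnegNat i k

theorem Dneg_eq_natCast (n k : ℕ) : Dneg n k = DnegNat n k := by
  have hvanish : ∀ l ∈ Icc 1 k, l ∉ Icc 1 (min (2 * n + 1) k) →
      (l ! * (l - 1)! : ℚ) / 2 ^ (l - 1) * (k.stirlingSecond l : ℚ) *
        ((2 * n + 1).stirlingSecond l : ℚ) = 0 := fun l hl hl' ↦ by
    simp only [mem_Icc, le_min_iff, not_and, not_le] at hl hl'
    rw [stirlingSecond_eq_zero_of_lt (by omega : 2 * n + 1 < l), Nat.cast_zero, mul_zero]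
  have hweight (s : ℕ) : (dnegWeight s : ℚ) = (s + 1)! * s ! / 2 ^ s :=
    eq_div_of_mul_eq (by positivity) (by exact_mod_cast dnegWeight_mul_two_pow s)
  rw [Dneg, DnegNat, stirling2_eq_stirlingSecond,
    sum_subset (Icc_subset_Icc_right (min_le_right _ _)) hvanish, ← Ico_add_one_right_eq_Icc,
    ← zero_add 1, ← sum_Ico_add', ← range_eq_Ico]
  push_cast
  simp only [hweight]

theorem Tneg_eq_natCast (n k : ℕ) : Tneg n k = TnegNat n k := by
  simp only [Tneg, TnegNat, Dneg_eq_natCast, Nat.cast_sum, Nat.cast_mul]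

theorem natCast_ne_zero_of_lt {p j : ℕ} (hj0 : 0 < j) (hjp : j < p) : (j : ZMod p) ≠ 0 := by
  rw [Ne, ZMod.natCast_eq_zero_iff]
  exact fun h ↦ (Nat.le_of_dvd hj0 h).not_gt hjp

section ZModPrime

variable {p : ℕ} [hp : Fact p.Prime]

theorem two_ne_zero_of_ne_two (hp2 : p ≠ 2) : (2 : ZMod p) ≠ 0 := by
  exact_mod_cast natCast_ne_zero_of_lt two_pos (lt_of_le_of_ne hp.out.two_le (Ne.symm hp2))

theorem natCast_choose_card_sub_one {j : ℕ} (hj : j < p) :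
    (((p - 1).choose j : ℕ) : ZMod p) = (-1) ^ j := by
  induction j with
  | zero => simp
  | succ j ih =>
    -- Pascal's rule on the same sum extended to `s = p - 1`.
    have hpascal := Nat.choose_succ_succ' (p - 1) j
    rw [Nat.sub_add_cancel hp.out.one_le] at hpascal
    have hdvd : ((p.choose (j + 1) : ℕ) : ZMod p) = 0 :=
      (ZMod.natCast_eq_zero_iff _ _).2 (hp.out.dvd_choose_self j.succ_ne_zero hj)
    rw [hpascal, Nat.cast_add, ih (by omega)] at hdvd
    linear_combination hdvd

theorem sum_range_add_one_pow (m : ℕ) :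
    ∑ j ∈ range (p - 1), ((j : ZMod p) + 1) ^ m = if p - 1 ∣ m then -1 else 0 := by
  classical
  have hunits := FiniteField.sum_pow_units (ZMod p) m
  rw [ZMod.card] at hunits
  rw [← hunits]
  have hne : ∀ j ∈ range (p - 1), (j : ZMod p) + 1 ≠ 0 := fun j hj ↦ by
    exact_mod_cast natCast_ne_zero_of_lt j.succ_pos (by rw [mem_range] at hj; omega)
  refine sum_bij' (fun j hj ↦ Units.mk0 _ (hne j hj)) (fun u _ ↦ (u : ZMod p).val - 1)
    (fun _ _ ↦ mem_univ _) (fun u _ ↦ ?_) (fun j hj ↦ ?_) (fun u _ ↦ ?_) (fun _ _ ↦ rfl)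
  · have := (u : ZMod p).val_lt
    have := hp.out.two_le
    rw [mem_range]
    omega
  · rw [mem_range] at hj
    simp only [Units.val_mk0]
    rw [← Nat.cast_succ, ZMod.val_cast_of_lt (by omega)]
    rfl
  · have hu : (u : ZMod p).val ≠ 0 := (ZMod.val_ne_zero _).2 u.ne_zero
    ext
    simp only [Units.val_mk0]
    rw [← Nat.cast_succ, Nat.succ_eq_add_one, Nat.sub_add_cancel (Nat.one_le_iff_ne_zero.2 hu),
      ZMod.natCast_zmod_val]

theorem sum_range_choose_mul_inv_two_pow (hp2 : p ≠ 2) {j : ℕ} (hj : j < p) :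
    ∑ s ∈ range (p - 1), ((s.choose j : ℕ) : ZMod p) * 2⁻¹ ^ s = 1 - (-1) ^ j := by
  have h2 := two_ne_zero_of_ne_two hp2
  have hinv : (2 : ZMod p) * 2⁻¹ = 1 := mul_inv_cancel₀ h2
  have hfermat : (2⁻¹ : ZMod p) ^ (p - 1) = 1 := ZMod.pow_card_sub_one_eq_one (inv_ne_zero h2)
  induction j with
  | zero =>
    have hgeom := geom_sum_mul (2⁻¹ : ZMod p) (p - 1)
    rw [hfermat, sub_self] at hgeom
    have hne : (2⁻¹ : ZMod p) - 1 ≠ 0 := fun h ↦ by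
      apply h2; linear_combination 2 * hinv - 4 * h
    simpa using (mul_eq_zero.1 hgeom).resolve_right hne
  | succ j ih =>
    -- Pascal's rule on the same sum extended to `s = p - 1`.
    have hpascal : ∑ s ∈ range (p - 1), ((s.choose (j + 1) : ℕ) : ZMod p) * 2⁻¹ ^ s
        + (((p - 1).choose (j + 1) : ℕ) : ZMod p) * 2⁻¹ ^ (p - 1)
        = 2⁻¹ * (∑ s ∈ range (p - 1), ((s.choose j : ℕ) : ZMod p) * 2⁻¹ ^ s
          + ∑ s ∈ range (p - 1), ((s.choose (j + 1) : ℕ) : ZMod p) * 2⁻¹ ^ s) := by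
      rw [← sum_range_succ (fun s ↦ ((s.choose (j + 1) : ℕ) : ZMod p) * 2⁻¹ ^ s),
        sum_range_succ', ← sum_add_distrib, mul_sum]
      simp only [Nat.choose_succ_succ', Nat.choose_zero_succ, Nat.cast_add, Nat.cast_zero,
        zero_mul, add_zero, pow_succ]
      exact sum_congr rfl fun s _ ↦ by ring
    rw [ih (by omega), natCast_choose_card_sub_one hj, hfermat] at hpascal
    linear_combination 2 * hpascal + (1 - (-1) ^ j + ∑ s ∈ range (p - 1),
      ((s.choose (j + 1) : ℕ) : ZMod p) * 2⁻¹ ^ s) * hinv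

theorem sum_range_neg_one_pow_mul_add_one_pow (hp2 : p ≠ 2) (n : ℕ) :
    ∑ j ∈ range (p - 1), (-1) ^ j * ((j : ZMod p) + 1) ^ (2 * n) = 0 := by
  have hodd : Odd (p - 2) := by
    obtain ⟨k, hk⟩ := hp.out.even_sub_one hp2
    exact ⟨k - 1, by have := hp.out.two_le; omega⟩
  -- `j ↦ p - 2 - j` sends `j + 1` to `-(j + 1)` and, as `p` is odd, flips the parity of `j`.
  have hflip : ∀ j ∈ range (p - 1),
      (-1) ^ (p - 1 - 1 - j) * (((p - 1 - 1 - j : ℕ) : ZMod p) + 1) ^ (2 * n) =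
        -((-1) ^ j * ((j : ZMod p) + 1) ^ (2 * n)) := fun j hj ↦ by
    rw [mem_range] at hj
    have hcast : ((p - 1 - 1 - j : ℕ) : ZMod p) + 1 = -((j : ZMod p) + 1) := by
      have h : ((p - 1 - 1 - j + j + 1 + 1 : ℕ) : ZMod p) = 0 := by
        rw [show p - 1 - 1 - j + j + 1 + 1 = p by omega, ZMod.natCast_self]
      push_cast at h
      linear_combination h
    have hsign : (-1 : ZMod p) ^ (p - 1 - 1 - j) * (-1) ^ j = -1 := by
      rw [← pow_add, show p - 1 - 1 - j + j = p - 2 by omega, hodd.neg_one_pow]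
    have hsq : (-1 : ZMod p) ^ j * (-1) ^ j = 1 := by
      rw [← mul_pow, neg_mul_neg, one_mul, one_pow]
    rw [hcast, (even_two_mul n).neg_pow]
    linear_combination
      ((j : ZMod p) + 1) ^ (2 * n) * ((-1) ^ j * hsign - (-1) ^ (p - 1 - 1 - j) * hsq)
  have hreflect := sum_range_reflect (fun j ↦ (-1) ^ j * ((j : ZMod p) + 1) ^ (2 * n)) (p - 1)
  rw [sum_congr rfl hflip, sum_neg_distrib] at hreflect
  have h2 := two_ne_zero_of_ne_two hp2
  exact (mul_eq_zero.1 (by linear_combination -hreflect : (2 : ZMod p) * _ = 0)).resolve_left h2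

theorem natCast_factorial_mul_stirlingSecond_card_sub_one {s : ℕ} (hs : s + 1 < p) :
    (((s + 1)! * (p - 1).stirlingSecond (s + 1) : ℕ) : ZMod p) = (-1) ^ s := by
  have hpow := fwdDiff_iter_eq_sum_shift (1 : ZMod p) (fun r ↦ r ^ (p - 1)) (s + 1) 0
  -- Among `0, …, s + 1`, Fermat's `r ^ (p - 1)` differs from the constant `1` only at `r = 0`,
  -- and `Δ^(s+1)` kills constants.
  have hconst := fwdDiff_iter_eq_sum_shift (1 : ZMod p) (fun r ↦ r ^ 0) (s + 1) 0
  rw [fwdDiff_iter_pow_eq_zero_of_lt s.succ_pos, Pi.zero_apply, sum_range_succ'] at hconst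
  rw [← fwdDiff_iter_pow_apply_zero, hpow, sum_range_succ']
  have hfermat : ∀ k ∈ range (s + 1), ((0 : ZMod p) + (k + 1) • 1) ^ (p - 1) = 1 :=
    fun k hk ↦ ZMod.pow_card_sub_one_eq_one <| by
      rw [mem_range] at hk
      simpa using natCast_ne_zero_of_lt (p := p) k.succ_pos (by omega)
  rw [sum_congr rfl fun k hk ↦ congrArg _ (hfermat k hk), zero_smul, add_zero,
    zero_pow (Nat.sub_ne_zero_of_lt hp.out.one_lt)]
  simp only [Int.reduceNeg, reduceSubDiff, nsmul_eq_mul, cast_add, cast_one, mul_one, zero_add,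
    pow_zero, zsmul_eq_mul, Int.cast_mul, Int.cast_pow, Int.cast_neg, Int.cast_one,
    Int.cast_natCast, tsub_zero, choose_zero_right, add_zero, smul_zero] at hconst ⊢
  linear_combination -hconst

theorem natCast_dnegWeight_mul_stirlingSecond_mul_stirlingSecond (hp2 : p ≠ 2) (n : ℕ) {s : ℕ}
    (hs : s + 1 < p) :
    ((dnegWeight s * (p - 1).stirlingSecond (s + 1) * (2 * n + 1).stirlingSecond (s + 1) : ℕ) :
        ZMod p) =
      2⁻¹ ^ s * ∑ j ∈ range (s + 1),
        (-1) ^ j * (s.choose j : ZMod p) * ((j : ZMod p) + 1) ^ (2 * n) := by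
  have h2 := two_ne_zero_of_ne_two hp2
  have hweight : (dnegWeight s : ZMod p) * 2 ^ s = (s + 1)! * s ! := by
    exact_mod_cast congrArg (Nat.cast : ℕ → ZMod p) (dnegWeight_mul_two_pow s)
  have hsucc : ((s + 1 : ℕ) : ZMod p) ≠ 0 := natCast_ne_zero_of_lt s.succ_pos hs
  have hfirst := natCast_factorial_mul_stirlingSecond_card_sub_one hs
  have hsecond := natCast_factorial_mul_stirlingSecond_succ_succ (k := 2 * n) (m := s)
    (by exact_mod_cast hsucc)
  rw [fwdDiff_iter_eq_sum_shift] at hsecond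
  apply mul_left_cancel₀ (pow_ne_zero s h2)
  calc (2 : ZMod p) ^ s * _
      = ((((s + 1)! * (p - 1).stirlingSecond (s + 1) : ℕ) : ZMod p)) *
          ((s ! * (2 * n + 1).stirlingSecond (s + 1) : ℕ) : ZMod p) := by
        push_cast
        linear_combination
          ((p - 1).stirlingSecond (s + 1) * (2 * n + 1).stirlingSecond (s + 1) : ZMod p) * hweight
    _ = ∑ j ∈ range (s + 1),
          (-1) ^ j * (s.choose j : ZMod p) * ((j : ZMod p) + 1) ^ (2 * n) := by
        rw [hfirst, hsecond, mul_sum]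
        refine sum_congr rfl fun j hj ↦ ?_
        have hsign : (-1 : ZMod p) ^ s * (-1) ^ (s - j) = (-1) ^ j := by
          rw [mem_range] at hj
          rw [← pow_add, show s + (s - j) = 2 * (s - j) + j by omega, pow_add, pow_mul,
            neg_one_sq, one_pow, one_mul]
        simp only [zsmul_eq_mul, nsmul_eq_mul, mul_one, Int.cast_mul, Int.cast_pow, Int.cast_neg,
          Int.cast_one, Int.cast_natCast]
        linear_combination ((s.choose j : ZMod p) * ((j : ZMod p) + 1) ^ (2 * n)) * hsign
    _ = _ := by rw [← mul_assoc, ← mul_pow, mul_inv_cancel₀ h2, one_pow, one_mul]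

theorem natCast_DnegNat_card_sub_one (hp2 : p ≠ 2) (n : ℕ) :
    ((DnegNat n (p - 1) : ℕ) : ZMod p) = if p - 1 ∣ 2 * n then 1 else 0 := by
  calc ((DnegNat n (p - 1) : ℕ) : ZMod p)
      = ∑ s ∈ range (p - 1), ∑ j ∈ range (s + 1),
          2⁻¹ ^ s * ((-1) ^ j * (s.choose j : ZMod p) * ((j : ZMod p) + 1) ^ (2 * n)) := by
        rw [DnegNat, Nat.cast_sum]
        refine sum_congr rfl fun s hs ↦ ?_
        rw [mem_range] at hs
        rw [natCast_dnegWeight_mul_stirlingSecond_mul_stirlingSecond hp2 n (by omega), mul_sum]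
    _ = ∑ s ∈ range (p - 1), ∑ j ∈ range (p - 1),
          2⁻¹ ^ s * ((-1) ^ j * (s.choose j : ZMod p) * ((j : ZMod p) + 1) ^ (2 * n)) := by
        refine sum_congr rfl fun s hs ↦
          sum_subset (range_subset_range.2 (by rw [mem_range] at hs; omega)) fun j _ hj ↦ ?_
        rw [mem_range, not_lt] at hj
        rw [choose_eq_zero_of_lt (by omega), Nat.cast_zero, mul_zero, zero_mul, mul_zero]
    _ = ∑ j ∈ range (p - 1), ((-1) ^ j * ((j : ZMod p) + 1) ^ (2 * n)) *
          ∑ s ∈ range (p - 1), (s.choose j : ZMod p) * 2⁻¹ ^ s := by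
        rw [sum_comm]
        refine sum_congr rfl fun j _ ↦ ?_
        rw [mul_sum]
        exact sum_congr rfl fun s _ ↦ by ring
    _ = ∑ j ∈ range (p - 1), (-1) ^ j * ((j : ZMod p) + 1) ^ (2 * n)
          - ∑ j ∈ range (p - 1), ((j : ZMod p) + 1) ^ (2 * n) := by
        rw [← sum_sub_distrib]
        refine sum_congr rfl fun j hj ↦ ?_
        have hsq : (-1 : ZMod p) ^ j * (-1) ^ j = 1 := by
          rw [← mul_pow, neg_mul_neg, one_mul, one_pow]
        rw [sum_range_choose_mul_inv_two_pow hp2 (by rw [mem_range] at hj; omega)]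
        linear_combination -((j : ZMod p) + 1) ^ (2 * n) * hsq
    _ = _ := by
        rw [sum_range_neg_one_pow_mul_add_one_pow hp2, sum_range_add_one_pow]
        split_ifs <;> ring

theorem natCast_TnegNat_card_sub_one (hp2 : p ≠ 2) (n : ℕ) :
    ((TnegNat n (p - 1) : ℕ) : ZMod p) = if 2 * n ≠ 0 ∧ p - 1 ∣ 2 * n then 2 else 1 := by
  have hodd_not_dvd : ∀ j, Odd j → ¬ p - 1 ∣ j := fun j hj hdvd ↦
    Nat.not_even_iff_odd.2 hj ((even_iff_two_dvd.1 (hp.out.even_sub_one hp2)).trans hdvd |>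
      even_iff_two_dvd.2)
  have hpowsum (j : ℕ) : (if p - 1 ∣ j then (1 : ZMod p) else 0)
      = -∑ t ∈ range (p - 1), ((t : ZMod p) + 1) ^ j := by
    rw [sum_range_add_one_pow]
    split_ifs <;> ring
  have hshift : ∑ t ∈ range (p - 1), ((t : ZMod p) + 1 + 1) ^ (2 * n)
      = ∑ t ∈ range (p - 1), ((t : ZMod p) + 1) ^ (2 * n) + 0 ^ (2 * n) - 1 := by
    have htop := sum_range_succ (fun t : ℕ ↦ ((t : ZMod p) + 1) ^ (2 * n)) (p - 1)
    have hbot := sum_range_succ' (fun t : ℕ ↦ ((t : ZMod p) + 1) ^ (2 * n)) (p - 1)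
    have hlast : ((p - 1 : ℕ) : ZMod p) + 1 = 0 := by
      rw [Nat.cast_sub hp.out.one_le, Nat.cast_one, ZMod.natCast_self, zero_sub, neg_add_cancel]
    rw [hlast] at htop
    push_cast at hbot
    linear_combination htop - hbot
  calc ((TnegNat n (p - 1) : ℕ) : ZMod p)
      = ∑ i ∈ range (n + 1),
          ((2 * n).choose (2 * i) : ZMod p) * if p - 1 ∣ 2 * i then 1 else 0 := by
        simp only [TnegNat, Nat.cast_sum, Nat.cast_mul, natCast_DnegNat_card_sub_one hp2]
    _ = ∑ j ∈ range (2 * n + 1), ((2 * n).choose j : ZMod p) * if p - 1 ∣ j then 1 else 0 :=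
        (sum_range_two_mul_succ_eq_sum_even
          (fun j ↦ ((2 * n).choose j : ZMod p) * if p - 1 ∣ j then 1 else 0)
          (fun j hj ↦ by rw [if_neg (hodd_not_dvd j hj), mul_zero]) n).symm
    _ = -∑ t ∈ range (p - 1), ((t : ZMod p) + 1 + 1) ^ (2 * n) := by
        simp only [hpowsum, mul_neg, sum_neg_distrib, mul_sum]
        rw [sum_comm]
        refine congrArg _ (sum_congr rfl fun t _ ↦ ?_)
        rw [add_pow]
        exact sum_congr rfl fun j _ ↦ by rw [one_pow, mul_one, mul_comm]
    _ = _ := by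
        rw [hshift, sum_range_add_one_pow]
        rcases n.eq_zero_or_pos with rfl | hn
        · simp
        · rw [zero_pow (by omega)]
          by_cases h : p - 1 ∣ 2 * n
          · rw [if_pos h, if_pos ⟨by omega, h⟩]
            ring
          · rw [if_neg h, if_neg fun h' ↦ h h'.2]
            ring

end ZModPrime

theorem exists_int_eq_mul_add_of_natCast_eq {p a r : ℕ} (h : (a : ZMod p) = r) :
    ∃ c : ℤ, (a : ℚ) = p * c + r := by
  obtain ⟨c, hc⟩ := (ZMod.intCast_eq_intCast_iff_dvd_sub r a p).1 (by exact_mod_cast h.symm)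
  refine ⟨c, ?_⟩
  have hcQ := congrArg (Int.cast : ℤ → ℚ) hc
  push_cast at hcQ
  linear_combination hcQ

theorem stmt15 (p n : ℕ) (hp : p.Prime) (hodd : Odd p) :
    ((2 * n = 0 ∨ ¬ (p - 1) ∣ 2 * n) → ∃ c : ℤ, Tneg n (p - 1) = (p : ℚ) * c + 1) ∧
    ((2 * n ≠ 0 ∧ (p - 1) ∣ 2 * n) → ∃ c : ℤ, Tneg n (p - 1) = (p : ℚ) * c + 2) := by
  have := Fact.mk hp
  have hp2 : p ≠ 2 := by rintro rfl; exact Nat.not_even_iff_odd.2 hodd even_two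
  have hT := natCast_TnegNat_card_sub_one hp2 n
  rw [Tneg_eq_natCast]
  constructor
  · intro h
    rw [if_neg (by tauto)] at hT
    exact_mod_cast exists_int_eq_mul_add_of_natCast_eq (r := 1) (by exact_mod_cast hT)
  · intro h
    rw [if_pos h] at hT
    exact_mod_cast exists_int_eq_mul_add_of_natCast_eq (r := 2) (by exact_mod_cast hT)
end
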